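/- For each j = 1, 2, ..., k, let G_j be a d_j-regular simple graph on n_j vertices with spectrum σ(G_j) (the multiset of eigenvalues of its adjacency matrix). Let Ĝ be the join of G₁, G₂, ..., G_k, i.e., the graph obtained from the disjoint union of G₁, ..., G_k by connecting each vertex of G_i to every vertex of G_j for all i ≠ j. Let B̂ be the k×k symmetric matrix with diagonal entries d₁, d₂, ..., d_k and (i,j) entry √(n_i n_j) for i ≠ j. Then the spectrum of Ĝ equals the multiset union over j of (σ(G_j) with one copy of d_j removed) together with the spectrum of B̂, and consequently the energy of Ĝ satisfies E(Ĝ) = Σ_{j=1}^{k} (E(G_j) − d_j) + E(B̂). -/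

import Mathlib

open Matrix Polynomial SimpleGraph

/-- The energy of a real square matrix: the sum of the absolute values of its
eigenvalues (roots of the characteristic polynomial), with multiplicity. -/
noncomputable def energy {ι : Type*} [Fintype ι] [DecidableEq ι]
    (M : Matrix ι ι ℝ) : ℝ :=
  (M.charpoly.roots.map fun x => |x|).sum

/-!
The all-ones vector of `G j` is an eigenvector for `d j`. In each block, change to a basis whose
first vector is the all-ones vector. The first vectors of all blocks then span a subspace
invariant under `A(Ĝ)`, on which `A(Ĝ)` acts by the quotient matrix with `d i` on the diagonal and
`n j + 1` off it; conjugating by `diag (√(n i + 1))` turns that matrix into `B̂`. On the remaining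
coordinates `A(Ĝ)` acts block-diagonally by the deflations of the `A(G j)`, whose characteristic
polynomials are `χ(G j) / (X - d j)`. Hence `χ(Ĝ) = χ(B̂) ∏ j, χ(G j) / (X - d j)`, which gives
the spectrum; the energy follows by summing absolute values.
-/

namespace Matrix

variable {R : Type*} [CommRing R]

theorem charpoly_conj_of_mul_eq_one {n : Type*} [Fintype n] [DecidableEq n] {P Q : Matrix n n R}
    (h : P * Q = 1) (A : Matrix n n R) : (Q * A * P).charpoly = A.charpoly := by
  rw [Matrix.mul_assoc, charpoly_mul_comm, Matrix.mul_assoc, h, Matrix.mul_one]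

section BlockDiagonal

variable {ι : Type*} [Fintype ι] [DecidableEq ι] {m : ι → Type*} [∀ i, Fintype (m i)]

theorem blockDiagonal'_mul_mul_blockDiagonal'_apply (P Q : ∀ i, Matrix (m i) (m i) R)
    (A : Matrix (Σ i, m i) (Σ i, m i) R) (i j : ι) (a : m i) (b : m j) :
    (blockDiagonal' P * A * blockDiagonal' Q) ⟨i, a⟩ ⟨j, b⟩
      = (P i * (of fun r s => A ⟨i, r⟩ ⟨j, s⟩) * Q j) a b := by
  simp [Matrix.mul_apply, Fintype.sum_sigma, blockDiagonal'_apply, Finset.sum_mul]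

variable [∀ i, DecidableEq (m i)]

theorem charpoly_blockDiagonal' (M : ∀ i, Matrix (m i) (m i) R) :
    (blockDiagonal' M).charpoly = ∏ i, (M i).charpoly := by
  -- Any linear order on `ι` makes `blockDiagonal' M` block triangular.
  let _ : LinearOrder ι := LinearOrder.lift' _ (Fintype.equivFin ι).injective
  obtain rfl : ‹DecidableEq ι› = LinearOrder.toDecidableEq := Subsingleton.elim _ _
  rw [(blockTriangular_blockDiagonal' M).charpoly, Finset.prod_subset (Finset.subset_univ _)]
  · refine Finset.prod_congr rfl fun i _ => ?_
    rw [← charpoly_reindex (Equiv.sigmaSubtype i)]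
    congr 1
    ext a b
    exact blockDiagonal'_apply_eq M i a b
  · intro i _ hi
    have : IsEmpty (m i) := ⟨fun a => hi (Finset.mem_image.2 ⟨⟨i, a⟩, Finset.mem_univ _, rfl⟩)⟩
    have : IsEmpty {x : Σ i, m i // x.1 = i} := (Equiv.sigmaSubtype i).isEmpty
    exact charpoly_isEmpty

end BlockDiagonal

section Deflation

variable (R) in
/-- The matrix with columns `𝟙, e₁, …, eₘ`: conjugating by it splits the eigenvector `𝟙` of a
matrix with constant row sums off the first coordinate. -/
def onesShear (m : ℕ) : Matrix (Fin (m + 1)) (Fin (m + 1)) R :=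
  1 + vecMulVec (1 - Pi.single 0 1) (Pi.single 0 1)

variable (R) in
def onesShearInv (m : ℕ) : Matrix (Fin (m + 1)) (Fin (m + 1)) R :=
  1 - vecMulVec (1 - Pi.single 0 1) (Pi.single 0 1)

variable {m : ℕ}

theorem onesShear_mul_onesShearInv : onesShear R m * onesShearInv R m = 1 := by
  simp [onesShear, onesShearInv, add_mul, mul_sub, vecMulVec_mul_vecMulVec]

theorem onesShear_mulVec_single : onesShear R m *ᵥ Pi.single 0 1 = 1 := by
  rw [onesShear, add_mulVec, one_mulVec, vecMulVec_mulVec]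
  simp

theorem onesShearInv_mulVec_one : onesShearInv R m *ᵥ 1 = Pi.single 0 1 := by
  simp [onesShearInv, sub_mulVec, vecMulVec_mulVec]

theorem one_vecMul_onesShear_zero : (1 ᵥ* onesShear R m) 0 = m + 1 := by
  simp [onesShear, vecMul_add, vecMul_vecMulVec, add_comm]

theorem charpoly_eq_X_sub_C_mul_of_col_zero (K : Matrix (Fin (m + 1)) (Fin (m + 1)) R)
    (hK : ∀ a : Fin m, K a.succ 0 = 0) :
    K.charpoly = (X - C (K 0 0)) * (K.submatrix Fin.succ Fin.succ).charpoly := by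
  have hsub : (charmatrix K).submatrix Fin.succ Fin.succ
      = charmatrix (K.submatrix Fin.succ Fin.succ) := by
    ext a b
    by_cases h : a = b <;> simp [h]
  rw [charpoly, det_succ_column_zero, Fin.sum_univ_succ, Finset.sum_eq_zero fun a _ => ?_]
  · simp [Fin.succAbove_zero, hsub, charpoly]
  · rw [charmatrix_apply_ne _ _ _ (Fin.succ_ne_zero a), hK, map_zero, neg_zero, mul_zero, zero_mul]

def onesDeflation (A : Matrix (Fin (m + 1)) (Fin (m + 1)) R) : Matrix (Fin m) (Fin m) R :=
  (onesShearInv R m * A * onesShear R m).submatrix Fin.succ Fin.succ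

theorem onesShear_conj_apply_zero {A : Matrix (Fin (m + 1)) (Fin (m + 1)) R} {d : R}
    (hA : A *ᵥ 1 = d • 1) (a : Fin (m + 1)) :
    (onesShearInv R m * A * onesShear R m) a 0 = (Pi.single 0 d : Fin (m + 1) → R) a := by
  have hcol : (onesShearInv R m * A * onesShear R m) *ᵥ Pi.single 0 1 = d • Pi.single 0 1 := by
    rw [← mulVec_mulVec, onesShear_mulVec_single, ← mulVec_mulVec, hA, mulVec_smul,
      onesShearInv_mulVec_one]
  simpa [Pi.single_apply] using congrFun hcol a

theorem charpoly_eq_X_sub_C_mul_onesDeflation {A : Matrix (Fin (m + 1)) (Fin (m + 1)) R} {d : R}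
    (hA : A *ᵥ 1 = d • 1) : A.charpoly = (X - C d) * (onesDeflation A).charpoly := by
  rw [← charpoly_conj_of_mul_eq_one onesShear_mul_onesShearInv A,
    charpoly_eq_X_sub_C_mul_of_col_zero _ fun a => by simp [onesShear_conj_apply_zero hA],
    onesShear_conj_apply_zero hA, Pi.single_eq_same, onesDeflation]

end Deflation

section Join

variable {ι : Type*} [Fintype ι] [DecidableEq ι]

def joinMatrix {m : ι → Type*} (A : ∀ i, Matrix (m i) (m i) R) :
    Matrix (Σ i, m i) (Σ i, m i) R :=
  blockDiagonal' A + of fun x y => if x.1 = y.1 then 0 else 1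

/-- The quotient matrix of the partition of the join into its factors (of `n i + 1` vertices). -/
def joinQuotientMatrix (n : ι → ℕ) (d : ι → R) : Matrix ι ι R :=
  of fun i j => if i = j then d i else (n j + 1 : R)

def sigmaFinSuccEquiv (n : ι → ℕ) : (Σ i, Fin (n i + 1)) ≃ ι ⊕ Σ i, Fin (n i) where
  toFun x := Fin.cases (Sum.inl x.1) (fun a => Sum.inr ⟨x.1, a⟩) x.2
  invFun := Sum.elim (fun i => ⟨i, 0⟩) fun x => ⟨x.1, x.2.succ⟩
  left_inv := by
    rintro ⟨i, a⟩
    induction a using Fin.cases <;> simp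
  right_inv := by
    rintro (i | ⟨i, a⟩) <;> simp

variable {n : ι → ℕ} (A : ∀ i, Matrix (Fin (n i + 1)) (Fin (n i + 1)) R)

theorem joinMatrix_onesShear_conj_apply_self (i : ι) (a b : Fin (n i + 1)) :
    (blockDiagonal' (fun i => onesShearInv R (n i)) * joinMatrix A *
      blockDiagonal' (fun i => onesShear R (n i))) ⟨i, a⟩ ⟨i, b⟩
      = (onesShearInv R (n i) * A i * onesShear R (n i)) a b := by
  have hblock : (of fun r s => joinMatrix A ⟨i, r⟩ ⟨i, s⟩) = A i := by
    ext r s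
    simp [joinMatrix]
  rw [blockDiagonal'_mul_mul_blockDiagonal'_apply, hblock]

theorem joinMatrix_onesShear_conj_apply_of_ne {i j : ι} (hij : i ≠ j) (a : Fin (n i + 1))
    (b : Fin (n j + 1)) :
    (blockDiagonal' (fun i => onesShearInv R (n i)) * joinMatrix A *
      blockDiagonal' (fun i => onesShear R (n i))) ⟨i, a⟩ ⟨j, b⟩
      = (Pi.single 0 1 : Fin (n i + 1) → R) a * (1 ᵥ* onesShear R (n j)) b := by
  have hblock : (of fun r s => joinMatrix A ⟨i, r⟩ ⟨j, s⟩) = vecMulVec 1 1 := by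
    ext r s
    simp [joinMatrix, hij, blockDiagonal'_apply_ne]
  rw [blockDiagonal'_mul_mul_blockDiagonal'_apply, hblock, mul_vecMulVec, vecMulVec_mul,
    onesShearInv_mulVec_one, vecMulVec_apply]

theorem charpoly_joinMatrix {d : ι → R} (hA : ∀ i, A i *ᵥ 1 = d i • 1) :
    (joinMatrix A).charpoly
      = (joinQuotientMatrix n d).charpoly * ∏ i, (onesDeflation (A i)).charpoly := by
  set N := blockDiagonal' (fun i => onesShearInv R (n i)) * joinMatrix A *
    blockDiagonal' (fun i => onesShear R (n i))
  have hN : N.charpoly = (joinMatrix A).charpoly := by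
    refine charpoly_conj_of_mul_eq_one ?_ _
    rw [← blockDiagonal'_mul]
    simp only [onesShear_mul_onesShearInv]
    exact blockDiagonal'_one
  set e := sigmaFinSuccEquiv n
  have h₁₁ : (reindex e e N).toBlocks₁₁ = joinQuotientMatrix n d := by
    ext i j
    change N ⟨i, 0⟩ ⟨j, 0⟩ = _
    rcases eq_or_ne i j with rfl | hij
    · simp [N, joinQuotientMatrix, joinMatrix_onesShear_conj_apply_self,
        onesShear_conj_apply_zero (hA i)]
    · simp [N, joinQuotientMatrix, joinMatrix_onesShear_conj_apply_of_ne _ hij,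
        one_vecMul_onesShear_zero, hij]
  have h₂₁ : (reindex e e N).toBlocks₂₁ = 0 := by
    ext ⟨i, a⟩ j
    change N ⟨i, a.succ⟩ ⟨j, 0⟩ = 0
    rcases eq_or_ne i j with rfl | hij
    · simp [N, joinMatrix_onesShear_conj_apply_self, onesShear_conj_apply_zero (hA i)]
    · simp [N, joinMatrix_onesShear_conj_apply_of_ne _ hij]
  have h₂₂ : (reindex e e N).toBlocks₂₂ = blockDiagonal' fun i => onesDeflation (A i) := by
    ext ⟨i, a⟩ ⟨j, b⟩
    change N ⟨i, a.succ⟩ ⟨j, b.succ⟩ = _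
    rcases eq_or_ne i j with rfl | hij
    · simp [N, joinMatrix_onesShear_conj_apply_self, onesDeflation]
    · simp [N, joinMatrix_onesShear_conj_apply_of_ne _ hij, blockDiagonal'_apply_ne _ _ _ hij]
  rw [← hN, ← charpoly_reindex e, ← fromBlocks_toBlocks (reindex e e N), h₁₁, h₂₁, h₂₂,
    charpoly_fromBlocks_zero₂₁, charpoly_blockDiagonal']

theorem charpoly_eq_charpoly_joinQuotientMatrix {B : Matrix ι ι ℝ} {n : ι → ℕ} {d : ι → ℝ}
    (hB : ∀ p q, B p q = if p = q then d p else √((n p + 1) * (n q + 1))) :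
    B.charpoly = (joinQuotientMatrix n d).charpoly := by
  set s : ι → ℝ := fun i => √(n i + 1)
  have hs : ∀ i, s i ≠ 0 := fun i => (Real.sqrt_pos.2 (by positivity)).ne'
  have hBconj : B = diagonal s * joinQuotientMatrix n d * diagonal s⁻¹ := by
    ext p q
    rw [hB, mul_diagonal, diagonal_mul, joinQuotientMatrix, of_apply]
    split_ifs with h
    · subst h
      rw [Pi.inv_apply, mul_comm (s p), mul_inv_cancel_right₀ (hs p)]
    · rw [Pi.inv_apply, eq_mul_inv_iff_mul_eq₀ (hs q), Real.sqrt_mul (by positivity), mul_assoc,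
        Real.mul_self_sqrt (by positivity), mul_comm]
  rw [hBconj, charpoly_conj_of_mul_eq_one]
  simp [diagonal_mul_diagonal, hs]

end Join

end Matrix

theorem Polynomial.roots_X_sub_C_mul {R : Type*} [CommRing R] [IsDomain R] (a : R) {q : R[X]}
    (hq : q ≠ 0) : ((X - C a) * q).roots = a ::ₘ q.roots := by
  rw [roots_mul (mul_ne_zero (X_sub_C_ne_zero a) hq), roots_X_sub_C, Multiset.singleton_add]

namespace SimpleGraph

theorem IsRegularOfDegree.adjMatrix_mulVec_one {V : Type*} [Fintype V] {G : SimpleGraph V}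
    [DecidableRel G.Adj] {d : ℕ} (hG : G.IsRegularOfDegree d) (R : Type*) [NonAssocSemiring R] :
    G.adjMatrix R *ᵥ 1 = (d : R) • 1 := by
  ext v
  simpa using adjMatrix_mulVec_const_apply_of_regular (a := (1 : R)) hG (v := v)

theorem adjMatrix_eq_joinMatrix {ι : Type*} [Fintype ι] [DecidableEq ι] {n : ι → ℕ}
    {G : ∀ j, SimpleGraph (Fin (n j + 1))} [∀ j, DecidableRel (G j).Adj]
    {Ghat : SimpleGraph (Σ j, Fin (n j + 1))} [DecidableRel Ghat.Adj]
    (hGhat : ∀ x y : Σ j, Fin (n j + 1), Ghat.Adj x y ↔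
      (x.1 ≠ y.1 ∨ ∃ h : x.1 = y.1, (G y.1).Adj (Fin.cast (by rw [h]) x.2) y.2))
    (R : Type*) [CommRing R] :
    Ghat.adjMatrix R = joinMatrix fun j => (G j).adjMatrix R := by
  ext ⟨i, a⟩ ⟨j, b⟩
  rcases eq_or_ne i j with rfl | hij
  · simp [joinMatrix, adjMatrix_apply, hGhat]
  · simp [joinMatrix, adjMatrix_apply, hGhat, hij, blockDiagonal'_apply_ne]

end SimpleGraph

/-- Spectrum and energy of the join of `k` regular graphs. -/
theorem stmt_13 (k : ℕ) (n d : Fin k → ℕ)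
    (G : ∀ j, SimpleGraph (Fin (n j + 1))) [∀ j, DecidableRel (G j).Adj]
    (hreg : ∀ j, (G j).IsRegularOfDegree (d j))
    (Ghat : SimpleGraph ((j : Fin k) × Fin (n j + 1))) [DecidableRel Ghat.Adj]
    (hGhat : ∀ x y : (j : Fin k) × Fin (n j + 1),
      Ghat.Adj x y ↔
        (x.1 ≠ y.1 ∨ ∃ h : x.1 = y.1, (G y.1).Adj (Fin.cast (by rw [h]) x.2) y.2))
    (Bhat : Matrix (Fin k) (Fin k) ℝ)
    (hBhat : ∀ p q : Fin k, Bhat p q =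
      if p = q then (d p : ℝ) else Real.sqrt ((n p + 1) * (n q + 1))) :
    (Ghat.adjMatrix ℝ).charpoly.roots
      = (Finset.univ.val.bind fun j : Fin k =>
          (((G j).adjMatrix ℝ).charpoly.roots).erase (d j))
        + Bhat.charpoly.roots
    ∧ energy (Ghat.adjMatrix ℝ)
      = (∑ j, (energy ((G j).adjMatrix ℝ) - (d j : ℝ))) + energy Bhat := by
  have hrow j := (hreg j).adjMatrix_mulVec_one ℝ
  have hroots_G j : ((G j).adjMatrix ℝ).charpoly.roots
      = (d j : ℝ) ::ₘ (onesDeflation ((G j).adjMatrix ℝ)).charpoly.roots := by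
    rw [charpoly_eq_X_sub_C_mul_onesDeflation (hrow j),
      roots_X_sub_C_mul _ (charpoly_monic _).ne_zero]
  have hprod : (∏ j, (onesDeflation ((G j).adjMatrix ℝ)).charpoly).Monic :=
    monic_prod_of_monic _ _ fun j _ => charpoly_monic _
  have hroots : (Ghat.adjMatrix ℝ).charpoly.roots = Bhat.charpoly.roots
      + Finset.univ.val.bind fun j => (onesDeflation ((G j).adjMatrix ℝ)).charpoly.roots := by
    rw [adjMatrix_eq_joinMatrix hGhat, charpoly_joinMatrix _ hrow,
      ← charpoly_eq_charpoly_joinQuotientMatrix hBhat,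
      roots_mul ((charpoly_monic _).mul hprod).ne_zero, roots_prod _ _ hprod.ne_zero]
  refine ⟨?_, ?_⟩
  · simp only [hroots, hroots_G, Multiset.erase_cons_head, add_comm]
  · simp only [energy, hroots, hroots_G, Multiset.map_add, Multiset.sum_add, Multiset.map_bind,
      Multiset.sum_bind, Multiset.map_cons, Multiset.sum_cons, Nat.abs_cast, add_sub_cancel_left,
      Finset.sum_eq_multiset_sum, add_comm]
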